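/- arXiv:2210.02566 — 10 statements merged into one kernel-verified Lean document; each statement's English description precedes it below -/
import Mathlib

section
/- Let d_R(t), d_S(t) be formal power series over a field of characteristic zero with d_R(0) ≠ 0, d_S(0) ≠ 0, d_R(0) + d_S(0) ≠ 0, and let h(t) be a formal power series with h(0) = 0 and h'(0) ≠ 0 admitting a compositional inverse h̄(t) (so h(h̄(t)) = t = h̄(h(t))). Suppose Z_R, Z_S, Z are formal power series satisfying the Z-sequence relations d_R(t) − d_R(0) = t·d_R(t)·Z_R(h(t)), d_S(t) − d_S(0) = t·d_S(t)·Z_S(h(t)), and (d_R(t)+d_S(t)) − (d_R(0)+d_S(0)) = t·(d_R(t)+d_S(t))·Z(h(t)). Then Z satisfies the weighted-average formula: (d_R(h̄(t)) + d_S(h̄(t)))·Z(t) = d_R(h̄(t))·Z_R(t) + d_S(h̄(t))·Z_S(t). -/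
/-!
For an inner series with zero constant term, `compose` is Mathlib's `PowerSeries.subst`, an
algebra map that is associative in the inner series. Substituting `h̄` into a Z-relation and using
`h(h̄) = t` turns it into `d(h̄) - d(0) = h̄ · d(h̄) · Z`. Adding the relations for `R` and `S` and
subtracting the one for `R + S` leaves `h̄` times the weighted-average identity, and `h̄ ≠ 0`
because `h(0) = 0 ≠ t`.
-/

open PowerSeries Finset

/-- Composition (substitution) `f(g(t))` of formal power series, which is the
honest substitution whenever the inner series `g` has zero constant term:
the coefficient of `t^n` in `f(g)` is `∑_{k=0}^{n} f_k · [t^n](g^k)`. -/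
noncomputable def PowerSeries.compose {R : Type*} [CommSemiring R] (f g : R⟦X⟧) : R⟦X⟧ :=
  PowerSeries.mk fun n => ∑ k ∈ Finset.range (n + 1), coeff k f * coeff n (g ^ k)

namespace PowerSeries

variable {R : Type*} [CommRing R]

theorem compose_eq_subst (f : R⟦X⟧) {g : R⟦X⟧} (hg : constantCoeff g = 0) :
    f.compose g = f.subst g := by
  ext n
  rw [coeff_subst' (.of_constantCoeff_zero' hg), compose, coeff_mk,
    finsum_eq_sum_of_support_subset _ (s := range (n + 1))]
  · simp only [smul_eq_mul]
  · intro k hk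
    rw [coe_range, Set.mem_Iio, Nat.lt_succ_iff]
    by_contra! hnk
    refine hk ?_
    dsimp only
    rw [coeff_of_lt_order n ((Nat.cast_lt.mpr hnk).trans_le
      (le_order_pow_of_constantCoeff_eq_zero k hg)), smul_zero]

theorem add_compose (f g p : R⟦X⟧) : (f + g).compose p = f.compose p + g.compose p := by
  ext n
  simp only [compose, coeff_mk, map_add, add_mul, sum_add_distrib]

theorem compose_sub_C_of_zseq {d h hbar Z : R⟦X⟧} {c : R} (hh : constantCoeff h = 0)
    (hhbar : constantCoeff hbar = 0) (hinv : h.compose hbar = X)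
    (hZ : d - C c = X * d * Z.compose h) :
    d.compose hbar - C c = hbar * d.compose hbar * Z := by
  have hsubst : HasSubst hbar := .of_constantCoeff_zero' hhbar
  rw [compose_eq_subst _ hh] at hZ
  rw [compose_eq_subst _ hhbar] at hinv ⊢
  have := congrArg (subst hbar) hZ
  rwa [subst_sub hsubst, subst_mul hsubst, subst_mul hsubst, subst_C, subst_X hsubst,
    subst_comp_subst_apply (.of_constantCoeff_zero' hh) hsubst, hinv, X_subst] at this

end PowerSeries

theorem zseq_sum_weighted_average_general {K : Type*} [Field K]
    (dR dS h hbar ZR ZS Z : K⟦X⟧)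
    (hh0 : constantCoeff h = 0)
    (hbar0 : constantCoeff hbar = 0)
    (hinv1 : h.compose hbar = X)
    (hZR : dR - C (constantCoeff dR) = X * dR * ZR.compose h)
    (hZS : dS - C (constantCoeff dS) = X * dS * ZS.compose h)
    (hZ : (dR + dS) - C (constantCoeff dR + constantCoeff dS) =
        X * (dR + dS) * Z.compose h) :
    (dR.compose hbar + dS.compose hbar) * Z =
      dR.compose hbar * ZR + dS.compose hbar * ZS := by
  have hR := compose_sub_C_of_zseq hh0 hbar0 hinv1 hZR
  have hS := compose_sub_C_of_zseq hh0 hbar0 hinv1 hZS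
  have hRS := compose_sub_C_of_zseq hh0 hbar0 hinv1 hZ
  rw [add_compose, map_add] at hRS
  have hbar_ne : hbar ≠ 0 := by
    rintro rfl
    rw [compose_eq_subst _ (map_zero _), subst_zero_of_constantCoeff_zero hh0] at hinv1
    exact X_ne_zero hinv1.symm
  refine mul_left_cancel₀ hbar_ne ?_
  linear_combination hR + hS - hRS

/-- the Z-sequence of the sum `R + S` of two Riordan arrays with a
common `h(t)` is the weighted average of the individual Z-sequences:
`(dR(h̄) + dS(h̄))·Z = dR(h̄)·Z_R + dS(h̄)·Z_S`. -/
theorem zseq_sum_weighted_average {K : Type*} [Field K] [CharZero K]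
    (dR dS h hbar ZR ZS Z : K⟦X⟧)
    (hdR : constantCoeff dR ≠ 0) (hdS : constantCoeff dS ≠ 0)
    (hdRS : constantCoeff dR + constantCoeff dS ≠ 0)
    (hh0 : constantCoeff h = 0) (hh1 : coeff 1 h ≠ 0)
    (hbar0 : constantCoeff hbar = 0)
    (hinv1 : h.compose hbar = X) (hinv2 : hbar.compose h = X)
    (hZR : dR - C (constantCoeff dR) = X * dR * ZR.compose h)
    (hZS : dS - C (constantCoeff dS) = X * dS * ZS.compose h)
    (hZ : (dR + dS) - C (constantCoeff dR + constantCoeff dS) =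
        X * (dR + dS) * Z.compose h) :
    (dR.compose hbar + dS.compose hbar) * Z =
      dR.compose hbar * ZR + dS.compose hbar * ZS :=
  zseq_sum_weighted_average_general dR dS h hbar ZR ZS Z hh0 hbar0 hinv1 hZR hZS hZ
end

section
/- For every natural number n, 5·(∑_{k=0}^{n} F_k·F_{n−k}) = (3n+5)·F_n + (n+1)·F_{n−1}, where F_i denotes the Fibonacci number with convention F_0 = F_1 = 1, F_i = F_{i−1} + F_{i−2} (so F_i = fib(i+1) in the convention fib(0)=0, fib(1)=1), and F_{−1} is interpreted as fib(0) = 0. Equivalently: 5·∑_{k=0}^{n} fib(k+1)·fib(n−k+1) = (3n+5)·fib(n+1) + (n+1)·fib(n). -/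
/-!
Write `c n = ∑_{i+j=n} F_i F_j` with `F_i = fib (i+1)`. Splitting off the term `j = 0` and
expanding `F_{j+1} = F_j + F_{j-1}` gives the inhomogeneous Fibonacci recurrence
`c (n+2) = c (n+1) + c n + F_{n+2}`, and the right-hand side of the identity satisfies the same
recurrence, so the identity follows by two-step induction.
-/

open Finset Nat

def fibConv (n : ℕ) : ℕ := ∑ p ∈ antidiagonal n, fib (p.1 + 1) * fib (p.2 + 1)

theorem fibConv_add_two (n : ℕ) :
    fibConv (n + 2) = fibConv (n + 1) + fibConv n + fib (n + 3) := by
  have shifted : ∑ p ∈ antidiagonal (n + 1), fib (p.1 + 1) * fib p.2 = fibConv n := by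
    simp [sum_antidiagonal_succ', fibConv]
  rw [fibConv, sum_antidiagonal_succ', zero_add, fib_one, mul_one]
  simp only [fib_add_two, mul_add, sum_add_distrib, shifted]
  unfold fibConv
  ring

theorem five_mul_fibConv (n : ℕ) :
    5 * fibConv n = (3 * n + 5) * fib (n + 1) + (n + 1) * fib n := by
  induction n using Nat.twoStepInduction with
  | zero => rfl
  | one => rfl
  | more n ih₀ ih₁ =>
    rw [fibConv_add_two, mul_add, mul_add, ih₀, ih₁, fib_add_two (n := n + 1), fib_add_two]
    ring

/-- self-convolution of the Fibonacci numbers (`F_i = fib (i+1)`):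
`5·∑_{k=0}^{n} F_k·F_{n−k} = (3n+5)·F_n + (n+1)·F_{n−1}`. -/
theorem fib_self_convolution (n : ℕ) :
    5 * ∑ k ∈ Finset.range (n + 1), Nat.fib (k + 1) * Nat.fib (n - k + 1) =
      (3 * n + 5) * Nat.fib (n + 1) + (n + 1) * Nat.fib n := by
  rw [← five_mul_fibConv, fibConv, sum_antidiagonal_eq_sum_range_succ_mk]
end

section
/- Define the operation Der on pairs of formal power series over a commutative ring by Der(d, h) = (h', t·d), where h' is the formal derivative. Then for every power series d(t) = ∑_i d_i t^i and every m ≥ 0, the 2m-fold iterate satisfies Der^{2m}(d(t), t) = (∑_{i≥0} d_i·(i+1)^m·t^i, t). That is, iterating Der an even number 2m of times on the Appell-subgroup Riordan array 𝓡(d(t), t) yields the Riordan array 𝓡(∑_{i≥0} d_i (i+1)^m t^i, t). -/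
open PowerSeries

/-- The operation `Der` on pairs of formal power series:
`Der(d, h) = (h', t·d)`. -/
noncomputable def riordanDer {R : Type*} [CommRing R] (p : R⟦X⟧ × R⟦X⟧) : R⟦X⟧ × R⟦X⟧ :=
  (p.2.derivativeFun, X * p.1)

/-! Since `d/dt (t·d(t)) = ∑ dᵢ (i+1) tⁱ`, the double step `Der²` fixes `h = t` and multiplies the
`i`-th coefficient of `d` by `i + 1`; iterating it `m` times gives the factor `(i+1)^m`. -/

theorem coeff_derivative_X_mul {R : Type*} [CommSemiring R] (f : R⟦X⟧) (n : ℕ) :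
    coeff n (d⁄dX R (X * f)) = coeff n f * (n + 1) := by
  rw [coeff_derivative, coeff_succ_X_mul]

theorem riordanDer_apply {R : Type*} [CommRing R] (p : R⟦X⟧ × R⟦X⟧) :
    riordanDer p = (d⁄dX R p.2, X * p.1) :=
  rfl

theorem riordanDer_riordanDer_appell {R : Type*} [CommRing R] (d : R⟦X⟧) :
    riordanDer (riordanDer (d, X)) = (mk fun i => coeff i d * ((i + 1 : ℕ) : R), X) := by
  rw [riordanDer_apply, riordanDer_apply, derivative_X, mul_one]
  refine Prod.ext ?_ rfl
  ext n
  rw [coeff_derivative_X_mul, coeff_mk, Nat.cast_succ]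

/-- even iterates of `Der` on the Appell-subgroup array `𝓡(d(t), t)`:
`Der^{2m}(𝓡(d, t)) = 𝓡(∑_i d_i (i+1)^m t^i, t)`. -/
theorem der_even_iterate_appell {R : Type*} [CommRing R] (d : R⟦X⟧) (m : ℕ) :
    riordanDer^[2 * m] (d, (X : R⟦X⟧)) =
      (PowerSeries.mk (fun i => coeff i d * ((i + 1 : ℕ) : R) ^ m), (X : R⟦X⟧)) := by
  rw [Function.iterate_mul]
  induction m with
  | zero => simp [PowerSeries.ext_iff]
  | succ m ih =>
    rw [Function.iterate_succ_apply', ih, Function.iterate_succ_apply, Function.iterate_one,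
      riordanDer_riordanDer_appell]
    simp only [coeff_mk, mul_assoc, pow_succ]
end

section
/- Let C(t) = ∑_{n≥0} catalan(n)·t^n be the generating function of the Catalan numbers (over ℚ or ℤ). Then for all natural numbers n ≥ k ≥ 0, the (n,k)-entry of Der(Cat) = 𝓡((t·C(t))', t·C(t)) satisfies: the coefficient of t^{n−k} in (d/dt)(t·C(t)) · C(t)^k equals binomial(2n−k, n−k). -/
/-!
Write `a(m, k) = [t^m] (t·C)'·C^k`. Multiplying by `C = 1 + t·C²` gives
`a(m, k+1) = a(m, k) + a(m-1, k+2)`, and `a(m, 0) = (m+1)·catalan m = binom(2m, m)`.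
These are the boundary values and Pascal's rule for `binom(2m+k, m)`, so by induction
`a(m, k) = binom(2m+k, m)`; the `(n, k)`-entry is `a(n-k, k)`.
-/

open PowerSeries

namespace PowerSeries

variable {R : Type*} [CommSemiring R]

local notation "𝒞" => map (Nat.castRingHom R) catalanSeries

theorem mk_catalan_eq_map_catalanSeries : (mk fun i => (catalan i : R)) = 𝒞 := by
  ext i
  simp

theorem map_catalanSeries_eq_one_add_X_mul_sq : 𝒞 = 1 + X * 𝒞 ^ 2 := by
  have h := congrArg (map (Nat.castRingHom R)) catalanSeries_sq_mul_X_add_one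
  simp only [map_add, map_mul, map_pow, map_X, map_one] at h
  exact h.symm.trans (by ring)

theorem coeff_derivative_X_mul_map_catalanSeries (m : ℕ) :
    coeff m (d⁄dX R (X * 𝒞)) = ((2 * m).choose m : R) := by
  rw [coeff_derivative, coeff_succ_X_mul, coeff_map, catalanSeries_coeff, ← Nat.centralBinom,
    ← succ_mul_catalan_eq_centralBinom]
  push_cast
  ring

theorem mul_map_catalanSeries_pow_succ (F : R⟦X⟧) (k : ℕ) :
    F * 𝒞 ^ (k + 1) = F * 𝒞 ^ k + X * (F * 𝒞 ^ (k + 2)) := by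
  calc F * 𝒞 ^ (k + 1) = F * 𝒞 ^ k * 𝒞 := by ring
    _ = F * 𝒞 ^ k * (1 + X * 𝒞 ^ 2) := by rw [← map_catalanSeries_eq_one_add_X_mul_sq]
    _ = F * 𝒞 ^ k + X * (F * 𝒞 ^ (k + 2)) := by ring

theorem coeff_derivative_X_mul_map_catalanSeries_mul_pow (m k : ℕ) :
    coeff m (d⁄dX R (X * 𝒞) * 𝒞 ^ k) = ((2 * m + k).choose m : R) := by
  induction m using Nat.strong_induction_on generalizing k with
  | _ m ihm =>
  induction k with
  | zero => simpa using coeff_derivative_X_mul_map_catalanSeries (R := R) m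
  | succ k ihk =>
    rw [mul_map_catalanSeries_pow_succ, map_add, ihk]
    cases m with
    | zero => simp
    | succ m =>
      rw [coeff_succ_X_mul, ihm m m.lt_succ_self,
        show 2 * (m + 1) + (k + 1) = (2 * m + (k + 2)) + 1 by ring, Nat.choose_succ_succ',
        show 2 * m + (k + 2) = 2 * (m + 1) + k by ring]
      push_cast
      ring

end PowerSeries

/-- the `(n,k)`-entry of `Der(Cat) = 𝓡((t·C(t))', t·C(t))`, where
`C(t)` is the Catalan generating function, is `binomial(2n−k, n−k)`:
`[t^{n−k}]((t·C)'·C^k) = C(2n−k, n−k)` for `n ≥ k`. -/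
theorem der_catalan_entries (n k : ℕ) (hkn : k ≤ n) :
    coeff (n - k)
        ((X * PowerSeries.mk fun i => (catalan i : ℚ)).derivativeFun *
          (PowerSeries.mk fun i => (catalan i : ℚ)) ^ k) =
      ((2 * n - k).choose (n - k) : ℚ) := by
  rw [mk_catalan_eq_map_catalanSeries, ← show 2 * (n - k) + k = 2 * n - k by omega]
  exact coeff_derivative_X_mul_map_catalanSeries_mul_pow (n - k) k
end

section
/- Let C(t) = ∑_{n≥0} catalan(n)·t^n be the generating function of the Catalan numbers (over ℚ or ℤ). Then for all natural numbers n ≥ k ≥ 0, the (n,k)-entry of Der(Sha) = 𝓡(C'(t), t·C(t)) satisfies: the coefficient of t^{n−k} in C'(t)·C(t)^k equals binomial(2n−k+2, n−k). -/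
/-!
Differentiating `C^(k+1)` gives `(k+1) • C' * C^k`, so the entry `[t^m] (C' * C^k)` is
`(m+1)/(k+1)` times the ballot number `[t^(m+1)] C^(k+1)`. Multiplying `C = 1 + t C²` by `C^(j+1)`
gives `C^(j+2) = C^(j+1) + t C^(j+3)`, which on coefficients is Pascal's rule in disguise:
`[t^(m+1)] C^(j+1) = binom(2m+j+2, m+1) - binom(2m+j+2, m)`. The computation is carried out over `ℕ`
with Mathlib's `catalanSeries`, whose image under `ℕ → ℚ` is the series of the statement.
-/

open PowerSeries

theorem catalan_succ_add_choose (m : ℕ) :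
    catalan (m + 1) + (2 * m + 2).choose m = (2 * m + 2).choose (m + 1) := by
  have hcat : (m + 2) * catalan (m + 1) = (2 * m + 2).choose (m + 1) :=
    succ_mul_catalan_eq_centralBinom (m + 1)
  have hshift := Nat.choose_succ_right_eq (2 * m + 2) m
  rw [show 2 * m + 2 - m = m + 2 by omega] at hshift
  refine Nat.eq_of_mul_eq_mul_left (show 0 < m + 2 by omega) ?_
  linear_combination hcat - hshift

namespace PowerSeries

theorem map_derivative {R S : Type*} [CommSemiring R] [CommSemiring S] (φ : R →+* S)
    (f : R⟦X⟧) : d⁄dX S (map φ f) = map φ (d⁄dX R f) := by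
  ext n
  simp [coeff_derivative]

theorem coeff_derivative_mul_pow {R : Type*} [CommSemiring R] (f : R⟦X⟧) (k m : ℕ) :
    (k + 1) * coeff m (d⁄dX R f * f ^ k) = coeff (m + 1) (f ^ (k + 1)) * (m + 1) := by
  rw [← coeff_derivative, Derivation.leibniz_pow, Nat.add_sub_cancel, smul_eq_mul,
    mul_comm (f ^ k), map_nsmul, nsmul_eq_mul, Nat.cast_succ]

theorem catalanSeries_pow_add_two (j : ℕ) :
    catalanSeries ^ (j + 2) = catalanSeries ^ (j + 1) + X * catalanSeries ^ (j + 3) := by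
  calc catalanSeries ^ (j + 2) = catalanSeries ^ (j + 1) * (catalanSeries ^ 2 * X + 1) := by
        rw [catalanSeries_sq_mul_X_add_one, pow_succ]
    _ = catalanSeries ^ (j + 1) + X * catalanSeries ^ (j + 3) := by ring

theorem coeff_succ_catalanSeries_pow_add_two (m j : ℕ) :
    coeff (m + 1) (catalanSeries ^ (j + 2)) =
      coeff (m + 1) (catalanSeries ^ (j + 1)) + coeff m (catalanSeries ^ (j + 3)) := by
  rw [catalanSeries_pow_add_two, map_add, coeff_succ_X_mul]

theorem coeff_zero_catalanSeries_pow (j : ℕ) : coeff 0 (catalanSeries ^ j) = 1 := by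
  simp

theorem coeff_succ_catalanSeries_pow_add_choose (m j : ℕ) :
    coeff (m + 1) (catalanSeries ^ (j + 1)) + (2 * m + j + 2).choose m =
      (2 * m + j + 2).choose (m + 1) := by
  induction m generalizing j with
  | zero =>
    induction j with
    | zero => simp
    | succ j ih =>
      rw [coeff_succ_catalanSeries_pow_add_two, coeff_zero_catalanSeries_pow]
      simp only [mul_zero, zero_add, Nat.choose_zero_right, Nat.choose_one_right] at ih ⊢
      omega
  | succ m ihm =>
    induction j with
    | zero => simpa using catalan_succ_add_choose (m + 1)
    | succ j ih =>
      have hrec := coeff_succ_catalanSeries_pow_add_two (m + 1) j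
      have hm : coeff (m + 1) (catalanSeries ^ (j + 3)) + (2 * m + j + 4).choose m =
          (2 * m + j + 4).choose (m + 1) := ihm (j + 2)
      have hpascal₁ := Nat.choose_succ_succ' (2 * m + j + 4) m
      have hpascal₂ := Nat.choose_succ_succ' (2 * m + j + 4) (m + 1)
      rw [show 2 * (m + 1) + j + 2 = 2 * m + j + 4 by ring] at ih
      rw [show 2 * (m + 1) + (j + 1) + 2 = 2 * m + j + 4 + 1 by ring, hrec]
      omega

theorem coeff_derivative_catalanSeries_mul_pow (m k : ℕ) :
    coeff m (d⁄dX ℕ catalanSeries * catalanSeries ^ k) = (2 * m + k + 2).choose m := by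
  refine Nat.eq_of_mul_eq_mul_left (show 0 < k + 1 by omega) ?_
  have hderiv := coeff_derivative_mul_pow catalanSeries k m
  simp only [Nat.cast_id] at hderiv
  have hballot := coeff_succ_catalanSeries_pow_add_choose m k
  have hshift := Nat.choose_succ_right_eq (2 * m + k + 2) m
  rw [show 2 * m + k + 2 - m = m + k + 2 by omega] at hshift
  linear_combination hderiv + (m + 1) * hballot + hshift

end PowerSeries

/-- the `(n,k)`-entry of `Der(Sha) = 𝓡(C'(t), t·C(t))`, where
`C(t)` is the Catalan generating function, is `binomial(2n−k+2, n−k)`: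
`[t^{n−k}](C'·C^k) = C(2n−k+2, n−k)` for `n ≥ k`. -/
theorem der_shapiro_entries (n k : ℕ) (hkn : k ≤ n) :
    coeff (R := ℚ) (n - k)
        ((PowerSeries.mk fun i => (catalan i : ℚ)).derivativeFun *
          (PowerSeries.mk fun i => (catalan i : ℚ)) ^ k) =
      ((2 * n - k + 2).choose (n - k) : ℚ) := by
  have hcast : (PowerSeries.mk fun i => (catalan i : ℚ)) = map (Nat.castRingHom ℚ) catalanSeries := by
    ext i
    simp
  obtain ⟨m, rfl⟩ := Nat.exists_eq_add_of_le hkn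
  rw [hcast, show 2 * (k + m) - k + 2 = 2 * m + k + 2 by omega, Nat.add_sub_cancel_left]
  change coeff m (d⁄dX ℚ (map _ catalanSeries) * _) = _
  rw [map_derivative, ← map_pow, ← map_mul, coeff_map, coeff_derivative_catalanSeries_mul_pow]
  rfl
end

section
/- For all natural numbers n ≥ k ≥ 0: the sum, over all (k+1)-tuples (i_0, i_1, …, i_k) of natural numbers with i_0 + i_1 + ⋯ + i_k = n − k, of binomial(2·i_0, i_0)·catalan(i_1)·catalan(i_2)···catalan(i_k), equals binomial(2n−k, n). -/
/-!
Let `C = ∑ catalan m tᵐ` and `B_k = ∑ₘ binomial(2m + k, m + k) tᵐ`, so that the left-hand side is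
the coefficient of `t^(n-k)` in `B₀ · C^k` and the right-hand side that of `B_k`. Hence it suffices
to show `C · B_k = B_(k+1)`. Pascal's rule reads `B_(k+1) = B_k + t · B_(k+2)`, and `C = 1 + t C²`
gives `C · B_k = B_k + t · C · (C · B_k)`; comparing the two, `C · B_k = B_(k+1)` follows for all
`k` at once by induction on the coefficient index.
-/

open Finset PowerSeries

theorem Finset.Nat.sum_antidiagonalTuple_succ {M : Type*} [AddCommMonoid M] (k n : ℕ)
    (f : (Fin (k + 1) → ℕ) → M) :
    ∑ c ∈ Nat.antidiagonalTuple (k + 1) n, f c =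
      ∑ p ∈ antidiagonal n, ∑ d ∈ Nat.antidiagonalTuple k p.2, f (Fin.cons p.1 d) := by
  simp only [Finset.sum, Nat.antidiagonalTuple, Multiset.Nat.antidiagonalTuple,
    List.Nat.antidiagonalTuple, Multiset.map_coe, Multiset.sum_coe, List.flatMap,
    List.map_flatten, List.sum_flatten, List.map_map, Function.comp_def]
  exact (Multiset.sum_coe _).symm.trans (congrArg _ (Multiset.map_coe _ _).symm)

namespace PowerSeries

theorem coeff_prod_mk {R : Type*} [CommSemiring R] (k n : ℕ) (f : Fin k → ℕ → R) :
    coeff n (∏ j, mk (f j)) = ∑ c ∈ Finset.Nat.antidiagonalTuple k n, ∏ j, f j (c j) := by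
  induction k generalizing n with
  | zero => cases n <;> simp [coeff_one, Finset.Nat.antidiagonalTuple_zero_succ]
  | succ k ih =>
    rw [Fin.prod_univ_succ, coeff_mul, Finset.Nat.sum_antidiagonalTuple_succ]
    refine sum_congr rfl fun p _ => ?_
    rw [coeff_mk, ih, mul_sum]
    simp [Fin.prod_univ_succ]

/-- The coefficient of `tᵐ` is `binomial(2n - k, n)` for `n = m + k`. -/
def shiftedCentralBinomSeries (k : ℕ) : ℕ⟦X⟧ := mk fun m => (2 * m + k).choose (m + k)

@[simp]
theorem coeff_shiftedCentralBinomSeries (k m : ℕ) :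
    coeff m (shiftedCentralBinomSeries k) = (2 * m + k).choose (m + k) :=
  coeff_mk _ _

theorem shiftedCentralBinomSeries_zero : shiftedCentralBinomSeries 0 = mk Nat.centralBinom := rfl

theorem shiftedCentralBinomSeries_add_X_mul (k : ℕ) :
    shiftedCentralBinomSeries k + X * shiftedCentralBinomSeries (k + 2) =
      shiftedCentralBinomSeries (k + 1) := by
  ext (_ | m)
  · simp [shiftedCentralBinomSeries]
  · rw [map_add, coeff_succ_X_mul]
    simp only [coeff_shiftedCentralBinomSeries]
    rw [show 2 * (m + 1) + (k + 1) = (2 * m + k + 2) + 1 by ring,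
      show m + 1 + (k + 1) = (m + k + 1) + 1 by ring, Nat.choose_succ_succ']
    ring_nf

theorem coeff_catalanSeries_mul_shiftedCentralBinomSeries (m : ℕ) :
    ∀ k, coeff m (catalanSeries * shiftedCentralBinomSeries k) =
      coeff m (shiftedCentralBinomSeries (k + 1)) := by
  induction m using Nat.strong_induction_on with
  | _ m ih =>
  intro k
  cases m with
  | zero => simp [coeff_mul, shiftedCentralBinomSeries]
  | succ m =>
    have hCC : coeff m (catalanSeries * (catalanSeries * shiftedCentralBinomSeries k)) =
        coeff m (catalanSeries * shiftedCentralBinomSeries (k + 1)) := by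
      rw [coeff_mul, coeff_mul]
      exact sum_congr rfl fun p hp => by rw [ih p.2 (Nat.antidiagonal.snd_lt hp)]
    calc coeff (m + 1) (catalanSeries * shiftedCentralBinomSeries k)
        = coeff (m + 1) ((catalanSeries ^ 2 * X + 1) * shiftedCentralBinomSeries k) := by
          rw [catalanSeries_sq_mul_X_add_one]
      _ = coeff (m + 1) (shiftedCentralBinomSeries k) +
            coeff m (catalanSeries * (catalanSeries * shiftedCentralBinomSeries k)) := by
          rw [add_mul, one_mul, map_add, mul_comm _ X, mul_assoc, coeff_succ_X_mul, sq,
            mul_assoc, add_comm]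
      _ = coeff (m + 1) (shiftedCentralBinomSeries k) +
            coeff m (shiftedCentralBinomSeries (k + 2)) := by
          rw [hCC, ih m m.lt_succ_self]
      _ = coeff (m + 1) (shiftedCentralBinomSeries (k + 1)) := by
          rw [← shiftedCentralBinomSeries_add_X_mul k, map_add, coeff_succ_X_mul]

theorem catalanSeries_mul_shiftedCentralBinomSeries (k : ℕ) :
    catalanSeries * shiftedCentralBinomSeries k = shiftedCentralBinomSeries (k + 1) :=
  ext fun m => coeff_catalanSeries_mul_shiftedCentralBinomSeries m k

theorem mk_centralBinom_mul_catalanSeries_pow (k : ℕ) :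
    mk Nat.centralBinom * catalanSeries ^ k = shiftedCentralBinomSeries k := by
  induction k with
  | zero => rw [pow_zero, mul_one, shiftedCentralBinomSeries_zero]
  | succ k ih => rw [pow_succ', mul_left_comm, ih, catalanSeries_mul_shiftedCentralBinomSeries]

end PowerSeries

/-- for `n ≥ k`, summing `binomial(2i_0, i_0)·C_{i_1}···C_{i_k}` over all
weak compositions `(i_0, i_1, …, i_k)` of `n − k` gives `binomial(2n−k, n)`. -/
theorem weak_composition_catalan_identity (n k : ℕ) (hkn : k ≤ n) :
    ∑ c ∈ Finset.Nat.antidiagonalTuple (k + 1) (n - k),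
        (2 * c 0).choose (c 0) * ∏ j : Fin k, catalan (c j.succ) =
      (2 * n - k).choose n := by
  let f : Fin (k + 1) → ℕ → ℕ := Fin.cons Nat.centralBinom fun _ => catalan
  have hprod : ∏ j, mk (f j) = mk Nat.centralBinom * catalanSeries ^ k := by
    simp [f, Fin.prod_univ_succ, catalanSeries]
  calc ∑ c ∈ Finset.Nat.antidiagonalTuple (k + 1) (n - k),
        (2 * c 0).choose (c 0) * ∏ j : Fin k, catalan (c j.succ)
      = coeff (n - k) (∏ j, mk (f j)) := by
        rw [coeff_prod_mk]
        simp [f, Fin.prod_univ_succ, Nat.centralBinom]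
    _ = (2 * (n - k) + k).choose (n - k + k) := by
        rw [hprod, mk_centralBinom_mul_catalanSeries_pow, coeff_shiftedCentralBinomSeries]
    _ = (2 * n - k).choose n := by congr 1 <;> omega
end

section
/- For every natural number n: ∑_{k=0}^{n} 2^k · binomial(2n−k, n−k) = 4^n. -/
/-!
Replace `(n, n)` by `(a, b)`: both `∑_{k ≤ b} 2^k C(a+b-k, b-k)` and the partial row sum
`∑_{i ≤ b} C(a+b+1, i)` satisfy `f (b+1) = 2 f b + C(a+b+1, b+1)` (Pascal's rule for the latter),
so they agree. At `a = b = n` the row sum is half of row `2n+1`, i.e. `4^n`.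
-/

open Finset

namespace Nat

theorem sum_range_succ_choose_succ (m k : ℕ) :
    ∑ i ∈ range (k + 1), (m + 1).choose i =
      ∑ i ∈ range k, m.choose i + ∑ i ∈ range (k + 1), m.choose i := by
  rw [sum_range_succ', sum_range_succ' (fun i => m.choose i)]
  simp only [choose_succ_succ, sum_add_distrib, choose_zero_right]
  ring

theorem sum_range_two_pow_mul_choose (a b : ℕ) :
    ∑ k ∈ range (b + 1), 2 ^ k * (a + b - k).choose (b - k) =
      ∑ i ∈ range (b + 1), (a + b + 1).choose i := by
  induction b with
  | zero => simp
  | succ b ih =>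
    have hshift : ∀ k ∈ range (b + 1),
        2 ^ (k + 1) * (a + (b + 1) - (k + 1)).choose (b + 1 - (k + 1)) =
          2 * (2 ^ k * (a + b - k).choose (b - k)) := by
      intro k _
      rw [← add_assoc, Nat.add_sub_add_right, Nat.add_sub_add_right, pow_succ]
      ring
    have hrow : ∑ i ∈ range (b + 1 + 1), (a + (b + 1) + 1).choose i =
        2 * ∑ i ∈ range (b + 1), (a + b + 1).choose i + (a + b + 1).choose (b + 1) := by
      rw [← add_assoc a b 1, sum_range_succ_choose_succ, sum_range_succ _ (b + 1)]
      ring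
    rw [sum_range_succ', sum_congr rfl hshift, ← mul_sum, ih, hrow]
    simp [add_assoc]

end Nat

/-- `∑_{k=0}^{n} 2^k·binomial(2n−k, n−k) = 4^n`. -/
theorem der_catalan_powers_of_two (n : ℕ) :
    ∑ k ∈ Finset.range (n + 1), 2 ^ k * (2 * n - k).choose (n - k) = 4 ^ n := by
  rw [← Nat.sum_range_choose_halfway n, two_mul]
  exact Nat.sum_range_two_pow_mul_choose n n
end

section
/- For every natural number n: ∑_{k=0}^{n} (k+1) · binomial(2n−k, n−k) = binomial(2n+2, n), and moreover binomial(2n+2, n) = (n+1)·catalan(n+1). -/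
/-!
Reversing the order of summation turns the left-hand side into
`∑_{j ≤ n} (n + 1 - j) · C(j + n, n)`.
Raising the upper limit `m` of `∑_{j ≤ m} (m + 1 - j) · C(j + k, k)` by one adds a full
hockey-stick sum `∑_{j ≤ m + 1} C(j + k, k) = C(m + k + 2, k + 1)`, so by Pascal's rule the sum
is `C(m + k + 2, k + 2)`; for `m = k = n` this is `C(2n + 2, n + 2) = C(2n + 2, n)`.
The Catalan form follows from `(m + 1) · catalan m = C(2m, m)` and
`C(2n + 2, n + 1) · (n + 1) = C(2n + 2, n) · (n + 2)`.
-/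

open Finset

namespace Nat

theorem sum_range_sub_mul_add_choose (m k : ℕ) :
    ∑ i ∈ range (m + 1), (m + 1 - i) * (i + k).choose k = (m + k + 2).choose (k + 2) := by
  induction m with
  | zero => simp
  | succ m ih =>
    have split : ∀ i ∈ range (m + 2),
        (m + 2 - i) * (i + k).choose k = (m + 1 - i) * (i + k).choose k + (i + k).choose k := by
      intro i hi
      rw [mem_range] at hi
      rw [show m + 2 - i = m + 1 - i + 1 by omega, add_one_mul]
    rw [sum_congr rfl split, sum_add_distrib, sum_range_succ _ (m + 1), ih, sum_range_add_choose]
    simp only [Nat.sub_self, zero_mul, add_zero]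
    rw [show m + 1 + k + 2 = m + k + 2 + 1 by omega, show m + 1 + k + 1 = m + k + 2 by omega,
      choose_succ_succ' (m + k + 2) (k + 1), add_comm]

theorem sum_range_succ_mul_sub_add_choose (m k : ℕ) :
    ∑ i ∈ range (m + 1), (i + 1) * (m - i + k).choose k = (m + k + 2).choose (k + 2) := by
  rw [← sum_range_sub_mul_add_choose, ← sum_range_reflect]
  refine sum_congr rfl fun i hi => ?_
  rw [mem_range] at hi
  rw [Nat.add_sub_cancel, Nat.sub_sub_self (by omega)]
  congr 1
  omega

theorem choose_two_mul_add_two_eq_succ_mul_catalan_succ (n : ℕ) :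
    (2 * n + 2).choose n = (n + 1) * catalan (n + 1) := by
  have central : (n + 2) * catalan (n + 1) = (2 * n + 2).choose (n + 1) := by
    rw [succ_mul_catalan_eq_centralBinom, centralBinom_eq_two_mul_choose, mul_add_one]
  have ratio := choose_succ_right_eq (2 * n + 2) n
  rw [show 2 * n + 2 - n = n + 2 by omega, ← central] at ratio
  exact Nat.eq_of_mul_eq_mul_right (by omega : 0 < n + 2) (by rw [← ratio]; ring)

end Nat

/-- `∑_{k=0}^{n} (k+1)·binomial(2n−k, n−k) = binomial(2n+2, n)`,
which also equals `(n+1)·catalan(n+1)`. -/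
theorem der_catalan_naturals (n : ℕ) :
    (∑ k ∈ Finset.range (n + 1), (k + 1) * (2 * n - k).choose (n - k) =
        (2 * n + 2).choose n) ∧
      (2 * n + 2).choose n = (n + 1) * catalan (n + 1) := by
  refine ⟨?_, Nat.choose_two_mul_add_two_eq_succ_mul_catalan_succ n⟩
  have term_eq : ∀ k ∈ range (n + 1), (k + 1) * (2 * n - k).choose (n - k) =
      (k + 1) * (n - k + n).choose n := by
    intro k hk
    rw [mem_range] at hk
    rw [show 2 * n - k = n - k + n by omega, Nat.choose_symm_add]
  rw [sum_congr rfl term_eq, Nat.sum_range_succ_mul_sub_add_choose,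
    Nat.choose_symm_of_eq_add (show n + n + 2 = n + 2 + n by ring)]
  ring_nf
end

section
/- For every natural number n: (n+2) · ∑_{k=0}^{n} (2k+1) · binomial(2n−k, n−k) = (3n+2) · binomial(2n+1, n+1). (Equivalently, ∑_{k=0}^{n} (2k+1)·binomial(2n−k, n−k) = ((3n+2)/(n+2))·binomial(2n+1, n+1), the number of positive clusters of type D_{n+2}.) -/
/-!
Writing `k + j = n`, the entry `binomial(2n - k, n - k)` is `binomial(n + j, n)`, so the sum is a
convolution along the antidiagonal. Since `2k + 1 = 2(k + 1) - 1`, it is twice the convolution of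
`k + 1` with `binomial(n + j, n)` minus the plain hockey-stick sum, i.e.
`2 binomial(2n + 2, n + 2) - binomial(2n + 1, n + 1)`, and absorption
`(n + 2) binomial(2n + 2, n + 2) = (2n + 2) binomial(2n + 1, n + 1)` finishes.
-/

namespace Finset

theorem sum_antidiagonal_succ_mul_choose_add (d n : ℕ) :
    ∑ ij ∈ antidiagonal n, (ij.1 + 1) * (d + ij.2).choose d = (d + n + 2).choose (d + 2) := by
  induction n with
  | zero => simp
  | succ n ih =>
    calc ∑ ij ∈ antidiagonal (n + 1), (ij.1 + 1) * (d + ij.2).choose d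
        = (d + n + 1).choose d + ∑ ij ∈ antidiagonal n, (ij.1 + 1) * (d + ij.2).choose d +
            ∑ ij ∈ antidiagonal n, (d + ij.2).choose d := by
          rw [Nat.sum_antidiagonal_succ, add_assoc, ← sum_add_distrib]
          exact congr_arg₂ _ (by simp [add_assoc]) (sum_congr rfl fun ij _ => by ring)
      _ = (d + n + 3).choose (d + 2) := by
          have hlow : (d + n + 2).choose (d + 1) =
              (d + n + 1).choose d + (d + n + 1).choose (d + 1) := Nat.choose_succ_succ' _ _
          have hhigh : (d + n + 3).choose (d + 2) =
              (d + n + 2).choose (d + 1) + (d + n + 2).choose (d + 2) := Nat.choose_succ_succ' _ _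
          rw [ih, sum_antidiagonal_choose_add]
          omega

theorem sum_antidiagonal_odd_mul_choose_add (d n : ℕ) :
    ∑ ij ∈ antidiagonal n, (2 * ij.1 + 1) * (d + ij.2).choose d + (d + n + 1).choose (d + 1) =
      2 * (d + n + 2).choose (d + 2) := by
  rw [← sum_antidiagonal_choose_add, ← sum_antidiagonal_succ_mul_choose_add, mul_sum,
    ← sum_add_distrib]
  exact sum_congr rfl fun ij _ => by ring

theorem sum_range_mul_choose_two_mul_sub (f : ℕ → ℕ) (n : ℕ) :
    ∑ k ∈ range (n + 1), f k * (2 * n - k).choose (n - k) =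
      ∑ ij ∈ antidiagonal n, f ij.1 * (n + ij.2).choose n := by
  rw [Nat.sum_antidiagonal_eq_sum_range_succ fun i j => f i * (n + j).choose n]
  refine sum_congr rfl fun k hk => ?_
  have hkn : 2 * n - k = n + (n - k) := by have := mem_range_succ_iff.mp hk; omega
  rw [hkn, Nat.choose_symm_add]

end Finset

/-- `(n+2)·∑_{k=0}^{n} (2k+1)·binomial(2n−k, n−k) = (3n+2)·binomial(2n+1, n+1)`. -/
theorem der_catalan_odds (n : ℕ) :
    (n + 2) * ∑ k ∈ Finset.range (n + 1), (2 * k + 1) * (2 * n - k).choose (n - k) =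
      (3 * n + 2) * (2 * n + 1).choose (n + 1) := by
  have hconv := Finset.sum_antidiagonal_odd_mul_choose_add n n
  have habsorb := Nat.add_one_mul_choose_eq (2 * n + 1) (n + 1)
  rw [← Finset.sum_range_mul_choose_two_mul_sub (fun k => 2 * k + 1)] at hconv
  rw [show n + n + 1 = 2 * n + 1 by ring, show n + n + 2 = 2 * n + 1 + 1 by ring] at hconv
  linear_combination (n + 2) * hconv - 2 * habsorb
end

section
/- For every natural number n: ∑_{k=0}^{n} 2^k · binomial(2n−k+2, n−k) = 4^{n+1} − binomial(2n+3, n+1). (Stated in ℤ, or equivalently in ℕ as ∑_{k=0}^{n} 2^k·binomial(2n−k+2, n−k) + binomial(2n+3, n+1) = 4^{n+1}.) -/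
/-!
Reading the sum backwards, it is `F (n + 2) n`, where `F a n = ∑_{i + j = n} 2 ^ i C(a + j, j)`
(`twoPowConvChoose`) is the coefficient of `x ^ n` in `1 / ((1 - 2x)(1 - x) ^ (a + 1))`.
Multiplying by `1 - 2x`, resp. using `(1 - x) ^ -(a + 2) = (1 - x) ^ -(a + 1) + x (1 - x) ^ -(a + 2)`,
gives `F a (n + 1) = 2 F a n + C(a + n + 1, n + 1)` and `F (a + 1) (n + 1) = F a (n + 1) + F (a + 1) n`.
Eliminating `F (a + 1) (n + 1)` yields `F (a + 1) n + C(a + n + 2, n + 1) = F a (n + 1)`, so the sum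
plus `C(2n + 3, n + 1)` is the diagonal value `F (n + 1) (n + 1)`; the same recurrences together
with `C(2m + 2, m + 1) = 2 C(2m + 1, m + 1)` give `F (m + 1) (m + 1) = 4 F m m`.
-/

open Finset

def twoPowConvChoose (a n : ℕ) : ℕ :=
  ∑ p ∈ antidiagonal n, 2 ^ p.1 * (a + p.2).choose p.2

namespace twoPowConvChoose

theorem succ_right (a n : ℕ) :
    twoPowConvChoose a (n + 1) = 2 * twoPowConvChoose a n + (a + n + 1).choose (n + 1) := by
  simp only [twoPowConvChoose, Nat.sum_antidiagonal_succ, mul_sum, pow_succ]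
  rw [add_comm]
  simp only [pow_zero, one_mul, ← add_assoc, mul_assoc, mul_comm 2]

theorem succ_succ (a n : ℕ) :
    twoPowConvChoose (a + 1) (n + 1) = twoPowConvChoose a (n + 1) + twoPowConvChoose (a + 1) n := by
  simp only [twoPowConvChoose, Nat.sum_antidiagonal_succ']
  have pascal : ∀ p ∈ antidiagonal n, 2 ^ p.1 * (a + 1 + (p.2 + 1)).choose (p.2 + 1) =
      2 ^ p.1 * (a + (p.2 + 1)).choose (p.2 + 1) + 2 ^ p.1 * (a + 1 + p.2).choose p.2 := by
    intro p _
    rw [show a + 1 + (p.2 + 1) = a + 1 + p.2 + 1 by ring, Nat.choose_succ_succ',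
      show a + 1 + p.2 = a + (p.2 + 1) by ring]
    ring
  rw [sum_congr rfl pascal, sum_add_distrib]
  simp only [add_zero, Nat.choose_zero_right]
  ring

theorem succ_left_add_choose (a n : ℕ) :
    twoPowConvChoose (a + 1) n + (a + n + 2).choose (n + 1) = twoPowConvChoose a (n + 1) := by
  have h := succ_succ a n
  rw [succ_right, show a + 1 + n + 1 = a + n + 2 by ring] at h
  omega

theorem self_eq_four_pow (m : ℕ) : twoPowConvChoose m m = 4 ^ m := by
  induction m with
  | zero => rfl
  | succ m ih =>
    have central : (2 * m + 2).choose (m + 1) = 2 * (2 * m + 1).choose (m + 1) := by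
      rw [Nat.choose_succ_succ', ← Nat.choose_symm_half]
      ring
    have h₁ := succ_right (m + 1) m
    have h₂ := succ_left_add_choose m m
    have h₃ := succ_right m m
    rw [show m + 1 + m + 1 = 2 * m + 2 by ring] at h₁
    rw [show m + m + 2 = 2 * m + 2 by ring] at h₂
    rw [show m + m + 1 = 2 * m + 1 by ring] at h₃
    rw [pow_succ, ← ih]
    omega

end twoPowConvChoose

/-- `∑_{k=0}^{n} 2^k·binomial(2n−k+2, n−k) = 4^{n+1} − binomial(2n+3, n+1)`. -/
theorem der_shapiro_powers_of_two (n : ℕ) :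
    ∑ k ∈ Finset.range (n + 1), (2 ^ k * ((2 * n - k + 2).choose (n - k)) : ℤ) =
      4 ^ (n + 1) - (2 * n + 3).choose (n + 1) := by
  have hsum : ∑ k ∈ range (n + 1), (2 ^ k * ((2 * n - k + 2).choose (n - k)) : ℤ) =
      twoPowConvChoose (n + 2) n := by
    rw [twoPowConvChoose, Nat.sum_antidiagonal_eq_sum_range_succ_mk]
    push_cast
    refine sum_congr rfl fun k hk => ?_
    rw [show 2 * n - k + 2 = n + 2 + (n - k) by grind]
  have key := twoPowConvChoose.succ_left_add_choose (n + 1) n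
  rw [twoPowConvChoose.self_eq_four_pow, show n + 1 + n + 2 = 2 * n + 3 by ring] at key
  rw [hsum, eq_sub_iff_add_eq]
  exact_mod_cast key
end
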